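/- The upper central series of the ideal h = span{e_1,…,e_12} of f_13 is: z^1 = ⟨e_11, e_12⟩, z^2 = ⟨e_9,…,e_12⟩, z^3 = ⟨e_7,…,e_12⟩, z^4 = ⟨e_5,…,e_12⟩, z^5 = ⟨e_3,…,e_12⟩, z^6 = h. In particular h is 6-step nilpotent. -/

import Mathlib

open scoped BigOperators

/-- Structure constants of the 13-dimensional filiform Lie algebra `f₁₃`:
`f13SC i j k` is the coefficient of `e_k` in `⁅e_i, e_j⁆` for `i < j`
(and `0` otherwise; the full antisymmetric constants are obtained below). -/
noncomputable def f13SC : ℕ → ℕ → ℕ → ℂ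
  | 0, j, k => if 1 ≤ j ∧ j ≤ 11 ∧ k = j + 1 then 1 else 0
  | 1, 2, 4 => 1
  | 1, 3, 5 => 1
  | 1, 4, 6 => 9/10
  | 1, 4, 8 => -1
  | 1, 5, 7 => 4/5
  | 1, 5, 9 => -2
  | 1, 6, 8 => 5/7
  | 1, 6, 10 => -335/126
  | 1, 6, 12 => 22105/15246
  | 1, 7, 9 => 9/14
  | 1, 7, 11 => -125/42
  | 1, 8, 10 => 7/12
  | 1, 8, 12 => -4421/1452
  | 1, 9, 11 => 8/15
  | 1, 10, 12 => 27/55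
  | 2, 3, 6 => 1/10
  | 2, 3, 8 => 1
  | 2, 4, 7 => 1/10
  | 2, 4, 9 => 1
  | 2, 5, 8 => 3/35
  | 2, 5, 10 => 83/126
  | 2, 5, 12 => -22105/15246
  | 2, 6, 9 => 1/14
  | 2, 6, 11 => 20/63
  | 2, 7, 10 => 5/84
  | 2, 7, 12 => 697/10164
  | 2, 8, 11 => 1/20
  | 2, 9, 12 => 7/165
  | 3, 4, 8 => 1/70
  | 3, 4, 10 => 43/126
  | 3, 4, 12 => 22105/15246
  | 3, 5, 9 => 1/70
  | 3, 5, 11 => 43/126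
  | 3, 6, 10 => 1/84
  | 3, 6, 12 => 7589/30492
  | 3, 7, 11 => 1/105
  | 3, 8, 12 => 1/132
  | 4, 5, 10 => 1/420
  | 4, 5, 12 => 313/3388
  | 4, 6, 11 => 1/420
  | 4, 7, 12 => 3/1540
  | 5, 6, 12 => 1/2310
  | _, _, _ => 0

/-- The full (antisymmetrized) structure constants of `f₁₃`. -/
noncomputable def f13C (i j k : Fin 13) : ℂ :=
  f13SC i j k - f13SC j i k

/-- Structure constants of the ideal `h = ⟨e_1, …, e_12⟩` of `f₁₃`, in the basis
`e_1, …, e_12` (indexed by `Fin 12`, with index `i` corresponding to `e_{i+1}`). -/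
noncomputable def f13hC (i j k : Fin 12) : ℂ :=
  f13SC ((i : ℕ) + 1) ((j : ℕ) + 1) ((k : ℕ) + 1) -
    f13SC ((j : ℕ) + 1) ((i : ℕ) + 1) ((k : ℕ) + 1)

/-! Write `F_t` (`B.tailSpan t` below, where `B j = e_{j+1}`) for the span of
`e_{t+1}, …, e_12`. The structure constants are filtered: `[e_i, e_j]` only involves `e_k` with
`k ≥ i + j + 1`, so `[h, F_t] ⊆ F_{t+2}`. Conversely `ad e_1` sends `e_j` to a nonzero multiple of
`e_{j+2}` plus higher terms for `2 ≤ j ≤ 10`, and `[e_2, e_1] = -e_4 + …`; so if `[h, x] ⊆ F_t`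
with `t ≥ 4`, the lowest coefficients of `x` vanish one by one and `x ∈ F_{t-2}`.
Hence `z^k = F_{12-2k}` for every `k`. -/

theorem f13SC_eq_zero_of_lt {a b c : ℕ} (ha : 1 ≤ a) (hc : c < a + b + 1) :
    f13SC a b c = 0 := by
  unfold f13SC
  split <;> first | rfl | omega

theorem LieSubmodule.toSubmodule_ucs_bot_eq {R L M : Type*} [CommRing R] [LieRing L]
    [LieAlgebra R L] [AddCommGroup M] [Module R M] [LieRingModule L M] [LieModule R L M]
    (Z : ℕ → Submodule R M) (hZ₀ : Z 0 = ⊥) (hZ : ∀ k m, m ∈ Z (k + 1) ↔ ∀ x : L, ⁅x, m⁆ ∈ Z k)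
    (k : ℕ) : ((⊥ : LieSubmodule R L M).ucs k : Submodule R M) = Z k := by
  induction k with
  | zero => rw [LieSubmodule.ucs_zero, LieSubmodule.bot_toSubmodule, hZ₀]
  | succ k ih =>
    ext m
    rw [LieSubmodule.ucs_succ, LieSubmodule.mem_toSubmodule, LieSubmodule.mem_normalizer, hZ, ← ih]
    rfl

namespace Module.Basis

variable {R M : Type*} [Semiring R] [AddCommMonoid M] [Module R M] {n : ℕ} (B : Basis (Fin n) R M)

def tailSpan (t : ℕ) : Submodule R M :=
  Submodule.span R (B '' {j | t ≤ (j : ℕ)})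

variable {B}

theorem mem_tailSpan_iff {t : ℕ} {x : M} :
    x ∈ B.tailSpan t ↔ ∀ j : Fin n, (j : ℕ) < t → B.repr x j = 0 := by
  rw [tailSpan, mem_span_image]
  refine ⟨fun h j hj => by_contra fun hx => ?_, fun h j hj => ?_⟩
  · exact (h (Finsupp.mem_support_iff.mpr hx)).not_gt hj
  · exact le_of_not_gt fun hlt => Finsupp.mem_support_iff.mp hj (h j hlt)

variable (B)

theorem tailSpan_antitone : Antitone B.tailSpan :=
  fun _ _ h => Submodule.span_mono (Set.image_mono fun _ hj => le_trans h hj)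

theorem tailSpan_zero : B.tailSpan 0 = ⊤ := by
  simp [tailSpan, B.span_eq]

theorem tailSpan_eq_bot_of_le {t : ℕ} (ht : n ≤ t) : B.tailSpan t = ⊥ := by
  have hempty : {j : Fin n | t ≤ (j : ℕ)} = ∅ :=
    Set.eq_empty_of_forall_notMem fun j (hj : t ≤ (j : ℕ)) => (j.isLt.trans_le ht).not_ge hj
  rw [tailSpan, hempty, Set.image_empty, Submodule.span_empty]

end Module.Basis

section StructureConstants

variable {R L : Type*} [CommRing R] [LieRing L] [LieAlgebra R L] {n : ℕ}
  {B : Module.Basis (Fin n) R L} {c : Fin n → Fin n → Fin n → R}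

theorem repr_lie_basis_left (hB : ∀ i j, ⁅B i, B j⁆ = ∑ k, c i j k • B k) (i : Fin n) (x : L)
    (m : Fin n) : B.repr ⁅B i, x⁆ m = ∑ j, c i j m * B.repr x j := by
  conv_lhs => rw [← B.sum_repr x]
  simp only [lie_sum, lie_smul, hB, map_sum, map_smul, Finsupp.finsetSum_apply]
  simp [Finsupp.single_apply, mul_comm]

variable {d : ℕ} (hB : ∀ i j, ⁅B i, B j⁆ = ∑ k, c i j k • B k)
  (hc : ∀ i j m : Fin n, (m : ℕ) < i + j + d → c i j m = 0)
include hB hc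

theorem lie_mem_tailSpan {t : ℕ} {x : L} (hx : x ∈ B.tailSpan t) (y : L) :
    ⁅y, x⁆ ∈ B.tailSpan (t + d) := by
  have hbasis : ∀ i, ⁅B i, x⁆ ∈ B.tailSpan (t + d) := by
    rw [Module.Basis.mem_tailSpan_iff] at hx
    intro i
    refine Module.Basis.mem_tailSpan_iff.mpr fun m hm => ?_
    rw [repr_lie_basis_left hB]
    refine Finset.sum_eq_zero fun j _ => ?_
    by_cases hj : (j : ℕ) < t
    · rw [hx j hj, mul_zero]
    · rw [hc i j m (by omega), zero_mul]
  rw [← B.sum_repr y, sum_lie]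
  exact Submodule.sum_mem _ fun i _ =>
    smul_lie (B.repr y i) (B i) x ▸ Submodule.smul_mem _ _ (hbasis i)

theorem repr_lie_basis_of_mem_tailSpan {s : Fin n} {x : L} (hx : x ∈ B.tailSpan s) (i : Fin n)
    {m : Fin n} (hm : (m : ℕ) = i + s + d) : B.repr ⁅B i, x⁆ m = c i s m * B.repr x s := by
  rw [repr_lie_basis_left hB]
  refine Finset.sum_eq_single s (fun j _ hjs => ?_) (fun h => absurd (Finset.mem_univ s) h)
  rcases lt_or_gt_of_ne hjs with hlt | hgt
  · rw [Module.Basis.mem_tailSpan_iff.mp hx j hlt, mul_zero]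
  · rw [hc i j m (by omega), zero_mul]

end StructureConstants

theorem f13hC_eq_zero_of_lt {i j m : Fin 12} (h : (m : ℕ) < i + j + 2) : f13hC i j m = 0 := by
  rw [f13hC, f13SC_eq_zero_of_lt (by omega) (by omega), f13SC_eq_zero_of_lt (by omega) (by omega),
    sub_zero]

theorem f13hC_zero_ne_zero {s m : Fin 12} (hs : 1 ≤ (s : ℕ)) (hm : (m : ℕ) = s + 2) :
    f13hC 0 s m ≠ 0 := by
  obtain ⟨s, _⟩ := s
  obtain ⟨m, hm12⟩ := m
  simp only at hs hm
  subst hm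
  have hs9 : s ≤ 9 := by omega
  interval_cases s <;> norm_num [f13hC, f13SC]

section F13

variable {L : Type*} [LieRing L] [LieAlgebra ℂ L] {B : Module.Basis (Fin 12) ℂ L}
  (hB : ∀ i j : Fin 12, ⁅B i, B j⁆ = ∑ k : Fin 12, f13hC i j k • B k)
include hB

/-- The lowest coefficient `x_s` reappears as the coefficient of `B (s + 2)` in `⁅B 0, x⁆` when
`s ≥ 1`, and as the coefficient of `B 3` in `⁅B 1, x⁆` when `s = 0` (where `⁅B 0, B 0⁆ = 0`). -/
theorem f13h_mem_tailSpan_succ_of_lie_mem {x : L} {s t : ℕ} (hx : x ∈ B.tailSpan s)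
    (hst : s + 2 < t) (ht : 3 < t) (ht12 : t ≤ 12) (h₀ : ⁅B 0, x⁆ ∈ B.tailSpan t)
    (h₁ : ⁅B 1, x⁆ ∈ B.tailSpan t) :
    x ∈ B.tailSpan (s + 1) := by
  refine Module.Basis.mem_tailSpan_iff.mpr fun j hj => ?_
  rcases (Nat.lt_succ_iff.mp hj).lt_or_eq with hjs | rfl
  · exact Module.Basis.mem_tailSpan_iff.mp hx j hjs
  by_cases hj0 : j = 0
  · subst hj0
    have hlead := repr_lie_basis_of_mem_tailSpan hB (fun _ _ _ => f13hC_eq_zero_of_lt) hx 1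
      (m := 3) rfl
    rw [Module.Basis.mem_tailSpan_iff.mp h₁ 3 ht] at hlead
    exact (mul_eq_zero.mp hlead.symm).resolve_left (by norm_num [f13hC, f13SC])
  · have hm : (j : ℕ) + 2 < 12 := by omega
    have hlead := repr_lie_basis_of_mem_tailSpan hB (fun _ _ _ => f13hC_eq_zero_of_lt) hx 0
      (m := ⟨j + 2, hm⟩) (by simp [add_comm])
    rw [Module.Basis.mem_tailSpan_iff.mp h₀ _ (by simpa using hst)] at hlead
    exact (mul_eq_zero.mp hlead.symm).resolve_left
      (f13hC_zero_ne_zero (Nat.one_le_iff_ne_zero.mpr (Fin.val_ne_zero_iff.mpr hj0)) rfl)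

theorem f13h_mem_tailSpan_of_forall_lie_mem {x : L} {t : ℕ} (ht : 4 ≤ t) (ht12 : t ≤ 12)
    (hx : ∀ y : L, ⁅y, x⁆ ∈ B.tailSpan t) : x ∈ B.tailSpan (t - 2) := by
  suffices h : ∀ s ≤ t - 2, x ∈ B.tailSpan s from h _ le_rfl
  intro s
  induction s with
  | zero => exact fun _ => B.tailSpan_zero ▸ Submodule.mem_top
  | succ s ih =>
    exact fun hs => f13h_mem_tailSpan_succ_of_lie_mem hB (ih (by omega)) (by omega) (by omega) ht12
      (hx _) (hx _)

theorem f13h_toSubmodule_ucs_eq_tailSpan (k : ℕ) :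
    LieSubmodule.toSubmodule ((⊥ : LieIdeal ℂ L).ucs k) = B.tailSpan (12 - 2 * k) := by
  refine LieSubmodule.toSubmodule_ucs_bot_eq (fun k => B.tailSpan (12 - 2 * k))
    (B.tailSpan_eq_bot_of_le le_rfl)
    (fun k x => ⟨fun hx y => ?_, fun hx => ?_⟩) k
  · exact B.tailSpan_antitone (by omega)
      (lie_mem_tailSpan hB (fun _ _ _ => f13hC_eq_zero_of_lt) hx y)
  · rcases le_or_gt k 4 with hk | hk
    · simpa [show 12 - 2 * k - 2 = 12 - 2 * (k + 1) by omega] using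
        f13h_mem_tailSpan_of_forall_lie_mem hB (by omega) (by omega) hx
    · rw [show 12 - 2 * (k + 1) = 0 by omega, B.tailSpan_zero]
      exact Submodule.mem_top

end F13

/-- The upper central series of `h = ⟨e_1, …, e_12⟩` is
`z^1 = ⟨e_11, e_12⟩`, `z^2 = ⟨e_9, …, e_12⟩`, `z^3 = ⟨e_7, …, e_12⟩`,
`z^4 = ⟨e_5, …, e_12⟩`, `z^5 = ⟨e_3, …, e_12⟩`, `z^6 = h`
(`B j` corresponds to `e_{j+1}`, so `z^k = span {e_{j+1} : 12 - 2k ≤ j}` for `1 ≤ k ≤ 5`);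
in particular `h` is nilpotent of class exactly `6`. -/
theorem f13_ideal_h_upperCentralSeries
    (L : Type*) [LieRing L] [LieAlgebra ℂ L]
    (B : Module.Basis (Fin 12) ℂ L)
    (hB : ∀ i j : Fin 12, ⁅B i, B j⁆ = ∑ k : Fin 12, f13hC i j k • B k) :
    (∀ k : ℕ, 1 ≤ k → k ≤ 5 →
      (LieSubmodule.ucs k (⊥ : LieIdeal ℂ L) : Submodule ℂ L)
        = Submodule.span ℂ (B '' {j : Fin 12 | 12 - 2 * k ≤ (j : ℕ)})) ∧
    LieSubmodule.ucs 6 (⊥ : LieIdeal ℂ L) = ⊤ ∧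
    LieSubmodule.ucs 5 (⊥ : LieIdeal ℂ L) ≠ ⊤ := by
  have hucs := f13h_toSubmodule_ucs_eq_tailSpan hB
  refine ⟨fun k _ _ => ?_, ?_, fun htop => ?_⟩
  · rw [LieIdeal.toLieSubalgebra_toSubmodule]
    exact hucs k
  · rw [← LieSubmodule.toSubmodule_eq_top, hucs]
    exact B.tailSpan_zero
  · have h₀ : B 0 ∈ B.tailSpan 2 := by
      rw [← hucs 5, htop]
      exact Submodule.mem_top
    exact absurd (B.self_mem_span_image.mp h₀) (by decide)
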